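/- For $k > m$, with notation as in the stability theorem, one has the estimate $\|u^{k,m}\|^2 \le 2T^2 \sup_{1\le k',m'\le M}\|f^{k',m'}\|^2 + 2\|\beta^{k-m}\|^2$, using Parseval's identity, the Cauchy–Schwarz inequality over the $m$ terms of the diagonal sum, and the bounds $\mu_n^{k-m+l,l} \le \mu_n^{k,m}$, $\mu_n^{k-m,0} \le \mu_n^{k,m}$, together with $m\omega \le T$. -/

import Mathlib

/-- The integrating factor `μₙ^{k,m} = exp(λₙ/2 (k+m)ω)` at the grid points. -/
noncomputable def stmt4mu (lam ω : ℝ) (k m : ℕ) : ℝ :=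
  Real.exp (lam / 2 * (((k : ℝ) + (m : ℝ)) * ω))

open Finset

namespace HilbertBasis

variable {ι H : Type*} [NormedAddCommGroup H] [InnerProductSpace ℝ H] (b : HilbertBasis ι ℝ H)

theorem hasSum_inner_sq (x : H) : HasSum (fun i => inner ℝ x (b i) ^ 2) (‖x‖ ^ 2) := by
  simpa only [sq, real_inner_comm x, real_inner_self_eq_norm_sq]
    using b.hasSum_inner_mul_inner x x

theorem norm_tsum_smul_sq_le {c g : ι → ℝ} {G : ℝ} (hcg : ∀ i, c i ^ 2 ≤ g i) (hg : HasSum g G) :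
    ‖∑' i, c i • b i‖ ^ 2 ≤ G := by
  have hc : Summable fun i => c i ^ 2 :=
    hg.summable.of_nonneg_of_le (fun i => sq_nonneg _) hcg
  have hc2 : Memℓp c 2 := memℓp_gen (by simpa using hc)
  let v : lp (fun _ : ι => ℝ) 2 := ⟨c, hc2⟩
  have hv : HasSum (fun i => c i ^ 2) (‖v‖ ^ 2) := by
    simpa only [sq, real_inner_self_eq_norm_sq, Real.norm_eq_abs, abs_mul_abs_self]
      using lp.hasSum_inner (𝕜 := ℝ) v v
  rw [(b.hasSum_repr_symm v).tsum_eq, b.repr.symm.norm_map]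
  exact hasSum_le hcg hv hg

end HilbertBasis

theorem sq_sum_mul_le_card_mul_sum_sq {ι : Type*} (s : Finset ι) (r a : ι → ℝ)
    (hr : ∀ i ∈ s, |r i| ≤ 1) :
    (∑ i ∈ s, r i * a i) ^ 2 ≤ #s * ∑ i ∈ s, a i ^ 2 := by
  refine sq_sum_le_card_mul_sum_sq.trans
    (mul_le_mul_of_nonneg_left (sum_le_sum fun i hi => ?_) (by positivity))
  rw [mul_pow]
  exact mul_le_of_le_one_left (sq_nonneg _) ((sq_le_one_iff_abs_le_one _).2 (hr i hi))

theorem sq_mul_weighted_sum_add_le {ι : Type*} (s : Finset ι) (ω ρ β : ℝ) (r a : ι → ℝ)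
    (hr : ∀ i ∈ s, |r i| ≤ 1) (hρ : |ρ| ≤ 1) :
    (ω * ∑ i ∈ s, r i * a i + ρ * β) ^ 2 ≤ 2 * ω ^ 2 * #s * ∑ i ∈ s, a i ^ 2 + 2 * β ^ 2 := by
  have hS := mul_le_mul_of_nonneg_left (sq_sum_mul_le_card_mul_sum_sq s r a hr) (sq_nonneg ω)
  have hβ : (ρ * β) ^ 2 ≤ β ^ 2 := by
    rw [mul_pow]
    exact mul_le_of_le_one_left (sq_nonneg _) ((sq_le_one_iff_abs_le_one _).2 hρ)
  calc _ ≤ 2 * ((ω * ∑ i ∈ s, r i * a i) ^ 2 + (ρ * β) ^ 2) := add_sq_le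
    _ ≤ _ := by rw [mul_pow]; linarith

theorem abs_stmt4mu_mul_inv_le_one {lam ω : ℝ} (hlam : 0 ≤ lam) (hω : 0 ≤ ω) {a b k m : ℕ}
    (h : (a : ℝ) + b ≤ k + m) : |stmt4mu lam ω a b * (stmt4mu lam ω k m)⁻¹| ≤ 1 := by
  rw [abs_of_nonneg (by unfold stmt4mu; positivity)]
  exact mul_inv_le_one_of_le₀ (by unfold stmt4mu; gcongr) (Real.exp_pos _).le

theorem stmt4_general {H : Type*} [NormedAddCommGroup H] [InnerProductSpace ℝ H]
    (φ : HilbertBasis ℕ ℝ H) (lam : ℕ → ℝ)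
    (hlam : ∀ n, 0 < lam n) (ω T : ℝ) (hω : 0 < ω) (M : ℕ)
    (hM : (M : ℝ) * ω = T) (f : ℕ → ℕ → H) (β : ℕ → H)
    (k m : ℕ) (hkm : m < k) (hkM : k ≤ M)
    (u : H)
    (hu : u = ∑' n : ℕ,
      ((ω * ∑ l ∈ Finset.Icc 1 m,
          stmt4mu (lam n) ω (k - m + l) l * (stmt4mu (lam n) ω k m)⁻¹ *
            (inner ℝ (f (k - m + l) l) (φ n) : ℝ))
        + (stmt4mu (lam n) ω k m)⁻¹ * stmt4mu (lam n) ω (k - m) 0 *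
            (inner ℝ (β (k - m)) (φ n) : ℝ)) • φ n)
    (F : ℝ)
    (hF : ∀ k' m' : ℕ, 1 ≤ k' → k' ≤ M → 1 ≤ m' → m' ≤ M → ‖f k' m'‖ ^ 2 ≤ F) :
    ‖u‖ ^ 2 ≤ 2 * T ^ 2 * F + 2 * ‖β (k - m)‖ ^ 2 := by
  have hcard : (#(Icc 1 m) : ℝ) = m := by simp
  have hratio : ∀ n {a b : ℕ}, (a : ℝ) + b ≤ k + m →
      |stmt4mu (lam n) ω a b * (stmt4mu (lam n) ω k m)⁻¹| ≤ 1 :=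
    fun n _ _ => abs_stmt4mu_mul_inv_le_one (hlam n).le hω.le
  have hparseval : ‖u‖ ^ 2 ≤
      2 * ω ^ 2 * #(Icc 1 m) * ∑ l ∈ Icc 1 m, ‖f (k - m + l) l‖ ^ 2 + 2 * ‖β (k - m)‖ ^ 2 := by
    rw [hu]
    refine φ.norm_tsum_smul_sq_le (fun n => ?_) (((hasSum_sum fun l _ =>
      φ.hasSum_inner_sq _).mul_left _).add ((φ.hasSum_inner_sq _).mul_left 2))
    rw [mul_comm (stmt4mu (lam n) ω k m)⁻¹]
    refine sq_mul_weighted_sum_add_le _ _ _ _ _ _ (fun l hl => hratio n ?_) (hratio n ?_)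
    · have := (mem_Icc.1 hl).2
      exact_mod_cast (by omega : k - m + l + l ≤ k + m)
    · exact_mod_cast (by omega : k - m + 0 ≤ k + m)
  have hsum : ∑ l ∈ Icc 1 m, ‖f (k - m + l) l‖ ^ 2 ≤ m * F := by
    rw [← hcard, ← nsmul_eq_mul, ← sum_const]
    refine sum_le_sum fun l hl => ?_
    obtain ⟨hl1, hlm⟩ := mem_Icc.1 hl
    exact hF _ _ (by omega) (by omega) hl1 (by omega)
  have hF0 : 0 ≤ F := (sq_nonneg _).trans (hF 1 1 le_rfl (by omega) le_rfl (by omega))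
  have hmT : (m : ℝ) * ω ≤ T := by
    rw [← hM]
    gcongr
    exact_mod_cast (hkm.trans_le hkM).le
  calc ‖u‖ ^ 2 ≤ 2 * ω ^ 2 * m * (m * F) + 2 * ‖β (k - m)‖ ^ 2 := by
        rw [hcard] at hparseval
        have := mul_le_mul_of_nonneg_left hsum (by positivity : (0 : ℝ) ≤ 2 * ω ^ 2 * m)
        linarith
    _ = 2 * ((m : ℝ) * ω) ^ 2 * F + 2 * ‖β (k - m)‖ ^ 2 := by ring
    _ ≤ 2 * T ^ 2 * F + 2 * ‖β (k - m)‖ ^ 2 := by gcongr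

/-- the case `k > m` of the stability estimate:
`‖u^{k,m}‖² ≤ 2T² sup ‖f‖² + 2‖β^{k-m}‖²`. -/
theorem stmt4 {H : Type*} [NormedAddCommGroup H] [InnerProductSpace ℝ H]
    [CompleteSpace H] (φ : HilbertBasis ℕ ℝ H) (lam : ℕ → ℝ)
    (hlam : ∀ n, 0 < lam n) (ω T : ℝ) (hω : 0 < ω) (M : ℕ)
    (hM : (M : ℝ) * ω = T) (f : ℕ → ℕ → H) (β : ℕ → H)
    (k m : ℕ) (hm : 1 ≤ m) (hkm : m < k) (hkM : k ≤ M)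
    (u : H)
    (hu : u = ∑' n : ℕ,
      ((ω * ∑ l ∈ Finset.Icc 1 m,
          stmt4mu (lam n) ω (k - m + l) l * (stmt4mu (lam n) ω k m)⁻¹ *
            (inner ℝ (f (k - m + l) l) (φ n) : ℝ))
        + (stmt4mu (lam n) ω k m)⁻¹ * stmt4mu (lam n) ω (k - m) 0 *
            (inner ℝ (β (k - m)) (φ n) : ℝ)) • φ n)
    (F : ℝ)
    (hF : ∀ k' m' : ℕ, 1 ≤ k' → k' ≤ M → 1 ≤ m' → m' ≤ M → ‖f k' m'‖ ^ 2 ≤ F) :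
    ‖u‖ ^ 2 ≤ 2 * T ^ 2 * F + 2 * ‖β (k - m)‖ ^ 2 :=
  stmt4_general φ lam hlam ω T hω M hM f β k m hkm hkM u hu F hF
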